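/- In a binary-conflict-free net, if σt and σρ₁tρ₂ are finite firing sequences with t not occurring in ρ₁, then σtρ₁ρ₂ is a firing sequence and σtρ₁ρ₂ ≡₀* σρ₁tρ₂. -/

import Mathlib

open Relation

/-- A place/transition net with place type `S` and transition type `T`. -/
structure Net (S T : Type) where
  /-- arc weight from place `s` to transition `t` -/
  pre : T → S → ℕ
  /-- arc weight from transition `t` to place `s` -/
  post : T → S → ℕ
  /-- the initial marking -/
  M0 : S → ℕ
  pre_finite : ∀ t, {s | pre t s > 0}.Finite
  pre_nonempty : ∀ t, ∃ s, pre t s > 0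
  post_finite : ∀ t, {s | post t s > 0}.Finite

namespace Net

variable {S T : Type} (N : Net S T)

/-- the singleton step `{t}` is enabled at marking `M` -/
def Enabled (t : T) (M : S → ℕ) : Prop := ∀ s, N.pre t s ≤ M s

/-- the two-element multiset step `{t,u}` is enabled at marking `M` -/
def Enabled2 (t u : T) (M : S → ℕ) : Prop := ∀ s, N.pre t s + N.pre u s ≤ M s

/-- firing transition `t` leads from marking `M` to marking `M'` -/
def Fires (t : T) (M M' : S → ℕ) : Prop :=
  N.Enabled t M ∧ M' = fun s => M s - N.pre t s + N.post t s

/-- firing the finite transition sequence `σ` leads from `M` to `M'` -/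
inductive FiresList : (S → ℕ) → List T → (S → ℕ) → Prop
  | nil (M : S → ℕ) : FiresList M [] M
  | cons {M M₁ M' : S → ℕ} {t : T} {σ : List T} :
      N.Fires t M M₁ → FiresList M₁ σ M' → FiresList M (t :: σ) M'

/-- a marking is reachable -/
def Reachable (M : S → ℕ) : Prop := ∃ σ : List T, N.FiresList N.M0 σ M

/-- `σ` is a finite firing sequence of `N` -/
def FS (σ : List T) : Prop := ∃ M, N.FiresList N.M0 σ M

/-- `σ` is a (possibly infinite) firing sequence of `N` -/
def FSInf (σ : Stream'.Seq T) : Prop := ∀ n, N.FS (σ.take n)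

/-- adjacency `≡₀` on finite firing sequences -/
def Adj (σ ρ : List T) : Prop :=
  ∃ (α β : List T) (t u : T) (M : S → ℕ),
    σ = α ++ t :: u :: β ∧ ρ = α ++ u :: t :: β ∧
    N.FiresList N.M0 α M ∧ N.Enabled2 t u M ∧ N.FS σ ∧ N.FS ρ

/-- adjacency `≡₀` on possibly infinite firing sequences -/
def AdjSeq (σ ρ : Stream'.Seq T) : Prop :=
  ∃ (α : List T) (β : Stream'.Seq T) (t u : T) (M : S → ℕ),
    σ = (Stream'.Seq.ofList (α ++ [t, u])).append β ∧
    ρ = (Stream'.Seq.ofList (α ++ [u, t])).append β ∧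
    N.FiresList N.M0 α M ∧ N.Enabled2 t u M ∧ N.FSInf σ ∧ N.FSInf ρ

end Net

/-- the finite sequence `l` is a prefix of the possibly infinite sequence `s` -/
def ListPrefixSeq {T : Type} (l : List T) (s : Stream'.Seq T) : Prop :=
  s.take l.length = l

namespace Net

variable {S T : Type} (N : Net S T)

/-- the preorder `⊑₀^∞` on possibly infinite firing sequences -/
def Sqsubseteq0 (σ ρ : Stream'.Seq T) : Prop :=
  ∀ σ'' : List T, N.FS σ'' → ListPrefixSeq σ'' σ →
    ∃ σ' ρ' : List T, N.FS σ' ∧ N.FS ρ' ∧ σ'' <+: σ' ∧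
      ReflTransGen N.Adj σ' ρ' ∧ ListPrefixSeq ρ' ρ

end Net

/-- `N` is binary-conflict-free: any two distinct transitions individually
enabled at a reachable marking are enabled together as a step. -/
def Net.BinaryConflictFree {S T : Type} (N : Net S T) : Prop :=
  ∀ M, N.Reachable M → ∀ t u : T, t ≠ u →
    N.Enabled t M → N.Enabled u M → N.Enabled2 t u M

/-!
Induction on `ρ₁`. If `ρ₁ = u ρ₁'`, then `t` and `u` are both enabled after `σ`, and `t ≠ u`
since `t ∉ ρ₁`; binary-conflict-freeness makes `{t, u}` an enabled step there, so `σut` fires.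
The induction hypothesis for the prefix `σu` moves `t` to the front of `ρ₁'`, and the final
exchange of `u` and `t` right after `σ` is a single `≡₀`-step, since firing a concurrently
enabled pair in either order reaches the same marking.
-/

namespace Net

variable {S T : Type} {N : Net S T} {M M₁ M₂ M' : S → ℕ} {t u : T} {α β : List T}

theorem firesList_cons_iff :
    N.FiresList M (t :: α) M' ↔ ∃ M₁, N.Fires t M M₁ ∧ N.FiresList M₁ α M' := by
  constructor
  · rintro (_ | ⟨hfire, hrest⟩)
    exact ⟨_, hfire, hrest⟩
  · rintro ⟨M₁, hfire, hrest⟩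
    exact .cons hfire hrest

theorem firesList_append_iff :
    N.FiresList M (α ++ β) M' ↔ ∃ M₁, N.FiresList M α M₁ ∧ N.FiresList M₁ β M' := by
  induction α generalizing M with
  | nil => exact ⟨fun h => ⟨M, .nil M, h⟩, fun ⟨_, .nil _, h⟩ => h⟩
  | cons t α ih =>
    simp only [List.cons_append, firesList_cons_iff, ih]
    exact ⟨fun ⟨M₂, hf, M₁, h₁, h₂⟩ => ⟨M₁, ⟨M₂, hf, h₁⟩, h₂⟩,
      fun ⟨M₁, ⟨M₂, hf, h₁⟩, h₂⟩ => ⟨M₂, hf, M₁, h₁, h₂⟩⟩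

theorem FiresList.append (h₁ : N.FiresList M α M₁) (h₂ : N.FiresList M₁ β M') :
    N.FiresList M (α ++ β) M' :=
  firesList_append_iff.2 ⟨M₁, h₁, h₂⟩

theorem FiresList.unique (h₁ : N.FiresList M α M₁) (h₂ : N.FiresList M α M₂) : M₁ = M₂ := by
  induction h₁ with
  | nil => cases h₂; rfl
  | cons hfire _ ih =>
    obtain ⟨_, hfire', hrest⟩ := firesList_cons_iff.1 h₂
    exact ih (hfire.2 ▸ hfire'.2 ▸ hrest)

theorem FiresList.enabled_of_append_cons (hα : N.FiresList M α M₁)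
    (h : N.FiresList M (α ++ t :: β) M') : N.Enabled t M₁ := by
  obtain ⟨M₂, hα', hrest⟩ := firesList_append_iff.1 h
  obtain ⟨_, hfire, -⟩ := firesList_cons_iff.1 hrest
  exact hα.unique hα' ▸ hfire.1

theorem Enabled2.symm (h : N.Enabled2 t u M) : N.Enabled2 u t M :=
  fun s => (Nat.add_comm _ _).trans_le (h s)

theorem Enabled2.firesList_pair (h : N.Enabled2 t u M) :
    N.FiresList M [t, u] fun s => M s - N.pre t s + N.post t s - N.pre u s + N.post u s :=
  .cons ⟨fun s => by have := h s; omega, rfl⟩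
    (.cons ⟨fun s => by have := h s; dsimp only; omega, rfl⟩ (.nil _))

theorem Enabled2.firesList_swap (h : N.Enabled2 t u M) (hf : N.FiresList M (t :: u :: β) M') :
    N.FiresList M (u :: t :: β) M' := by
  obtain ⟨M₁, hpair, hrest⟩ := (firesList_append_iff (α := [t, u])).1 hf
  have hM₁ := hpair.unique h.firesList_pair
  have hcomm : (fun s => M s - N.pre t s + N.post t s - N.pre u s + N.post u s) =
      fun s => M s - N.pre u s + N.post u s - N.pre t s + N.post t s := by
    funext s; have := h s; omega
  rw [hM₁, hcomm] at hrest
  exact h.symm.firesList_pair.append hrest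

theorem FS.swap (hα : N.FiresList N.M0 α M) (h : N.Enabled2 t u M)
    (hf : N.FS (α ++ t :: u :: β)) : N.FS (α ++ u :: t :: β) := by
  obtain ⟨M', hf⟩ := hf
  obtain ⟨M₁, hα', hrest⟩ := firesList_append_iff.1 hf
  exact ⟨M', hα.append (h.firesList_swap (hα.unique hα' ▸ hrest))⟩

theorem adj_of_enabled2 (hα : N.FiresList N.M0 α M) (h : N.Enabled2 t u M)
    (hf : N.FS (α ++ t :: u :: β)) : N.Adj (α ++ t :: u :: β) (α ++ u :: t :: β) :=
  ⟨α, β, t, u, M, rfl, rfl, hα, h, hf, hf.swap hα h⟩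

theorem BinaryConflictFree.enabled2 (hN : N.BinaryConflictFree) (htu : t ≠ u) {γ : List T}
    (ht : N.FS (α ++ t :: β)) (hu : N.FS (α ++ u :: γ)) :
    ∃ M, N.FiresList N.M0 α M ∧ N.Enabled2 t u M := by
  obtain ⟨_, ht⟩ := ht
  obtain ⟨_, hu⟩ := hu
  obtain ⟨M, hα, -⟩ := firesList_append_iff.1 ht
  exact ⟨M, hα, hN M ⟨α, hα⟩ t u htu (hα.enabled_of_append_cons ht)
    (hα.enabled_of_append_cons hu)⟩

end Net

theorem closing_diamond_with {S T : Type} (N : Net S T)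
    (hN : N.BinaryConflictFree) (σ ρ₁ ρ₂ : List T) (t : T) (hn : t ∉ ρ₁)
    (ht : N.FS (σ ++ [t])) (hρ : N.FS (σ ++ ρ₁ ++ t :: ρ₂)) :
    N.FS (σ ++ t :: (ρ₁ ++ ρ₂)) ∧
      Relation.ReflTransGen N.Adj (σ ++ t :: (ρ₁ ++ ρ₂)) (σ ++ ρ₁ ++ t :: ρ₂) := by
  induction ρ₁ generalizing σ with
  | nil => exact ⟨by simpa using hρ, by simpa using .refl⟩
  | cons u ρ₁ ih =>
    obtain ⟨htu, hn⟩ := List.ne_and_not_mem_of_not_mem_cons hn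
    rw [List.append_cons σ u ρ₁] at hρ ⊢
    obtain ⟨M, hσ, hconc⟩ := hN.enabled2 htu ht (by simpa using hρ)
    have hut : N.FS (σ ++ [u] ++ [t]) := ⟨_, by simpa using hσ.append hconc.symm.firesList_pair⟩
    obtain ⟨hfs, hsteps⟩ := ih (σ ++ [u]) hn hut hρ
    rw [List.append_assoc, List.singleton_append] at hfs hsteps
    have hfs' : N.FS (σ ++ t :: u :: (ρ₁ ++ ρ₂)) := hfs.swap hσ hconc.symm
    exact ⟨hfs', .head (Net.adj_of_enabled2 hσ hconc hfs') hsteps⟩
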